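/- Let u = u_0 + u_1 τ + ⋯ + u_s τ^s ∈ k{τ} with k = F_{q^n}, u_0 ≠ 0 and u_s ≠ 0. Let P̄_{u,T}(x) ∈ F_q[x] be the characteristic polynomial of π = τ^n acting on the root space of u(x). Then Nr_{k/F_q}(u_0/u_s) = (−1)^{s(n−1)} P̄_{u,T}(0). -/

import Mathlib

/-- The twisted polynomial ring `R = k{τ}` over `k = F_{q^n}`, axiomatized. -/
structure TwistedPolynomialRing (q : ℕ) (k : Type) [Field k] (R : Type) [Ring R] [Module k R] where
  ι : k →+* R
  τ : R
  tau_comm : ∀ a : k, τ * ι a = ι (a ^ q) * τ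
  smul_def : ∀ (a : k) (r : R), a • r = ι a * r
  basis : Module.Basis ℕ k R
  basis_eq : ∀ i : ℕ, basis i = τ ^ i

variable {q : ℕ} {k R : Type} [Field k] [Ring R] [Module k R]

/-- The action of `f = Σ aᵢ τ^i` as the `F_q`-linear polynomial `x ↦ Σ aᵢ x^{q^i}`. -/
noncomputable def TwistedPolynomialRing.act (T : TwistedPolynomialRing q k R)
    {Ω : Type} [CommRing Ω] [Algebra k Ω] (f : R) (x : Ω) : Ω :=
  (T.basis.repr f).sum fun i a => algebraMap k Ω a * x ^ q ^ i

/-!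
Let `W` be the root space of `u` and `q = #F`. Since `u' = u₀ ≠ 0`, `u` is separable, so
`#W = q ^ s` and `dim_F W = s`. For a basis `e` of `W` the Moore determinant `Δ = det (e_i ^ q ^ j)`
is nonzero, and the Moore polynomial `Δ(e, X)` (the Moore determinant of `e₁, …, e_s, X`) has
degree `q ^ s`, leading coefficient `Δ` and vanishes on `W`; hence `Δ • u = u_s • Δ(e, X)`. Comparing the coefficients of `X` gives
`u₀ / u_s = (-1) ^ s Δ ^ (q - 1)`. Raising the rows of the Moore matrix to the power `q ^ n`
multiplies it by the matrix of `π`, so `Δ ^ (q ^ n - 1) = det π`. Since Frobenius fixes `-1`,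
`(-1) ^ (1 + q + ⋯ + q ^ (n - 1)) = (-1) ^ n`, and therefore
`Nr (u₀ / u_s) = (-1) ^ (s n) det π = (-1) ^ (s (n - 1)) P̄(0)`.
-/

open Polynomial

theorem eq_C_leadingCoeff_mul_prod_X_sub_C {A : Type*} [CommRing A] [IsDomain A] {p : A[X]}
    {Z : Finset A} (hZ : ∀ z ∈ Z, p.IsRoot z) (hdeg : p.natDegree ≤ Z.card) :
    p = C p.leadingCoeff * ∏ z ∈ Z, (X - C z) := by
  rcases eq_or_ne p 0 with rfl | hp
  · simp
  refine eq_leadingCoeff_mul_of_monic_of_dvd_of_natDegree_le (monic_prod_X_sub_C _ _) ?_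
    (by rwa [natDegree_finsetProd_X_sub_C_eq_card])
  rw [Finset.prod_eq_multiset_prod, Multiset.prod_X_sub_C_dvd_iff_le_roots hp,
    Multiset.le_iff_subset Z.nodup]
  exact fun z hz => (mem_roots hp).mpr (hZ z hz)

theorem LinearMap.eval_zero_charpoly {A M : Type*} [CommRing A] [AddCommGroup M] [Module A M]
    [Module.Free A M] [Module.Finite A M] (f : M →ₗ[A] M) :
    f.charpoly.eval 0 = (-1) ^ Module.finrank A M * LinearMap.det f := by
  rw [LinearMap.det_eq_sign_charpoly_coeff, ← mul_assoc, ← mul_pow, neg_one_mul, neg_neg, one_pow,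
    one_mul, coeff_zero_eq_eval_zero]

theorem pow_geom_sum_eq_of_mul_eq {K : Type*} [CommRing K] [IsDomain K] {x ε D d : K} {m n : ℕ}
    (hD : D ≠ 0) (hx : x * D = ε * D ^ m) (hd : D ^ m ^ n = d * D) :
    x ^ (∑ i ∈ Finset.range n, m ^ i) = ε ^ (∑ i ∈ Finset.range n, m ^ i) * d := by
  set ν := ∑ i ∈ Finset.range n, m ^ i
  have hexp : m * ν + 1 = ν + m ^ n := by
    have h := Finset.sum_range_succ' (fun i => m ^ i) n
    rw [Finset.sum_range_succ] at h
    simp only [pow_succ, ← Finset.sum_mul, pow_zero] at h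
    rw [mul_comm, h]
  apply mul_right_cancel₀ (pow_ne_zero (ν + 1) hD)
  calc x ^ ν * D ^ (ν + 1) = (x * D) ^ ν * D := by ring
    _ = ε ^ ν * D ^ (m * ν + 1) := by rw [hx, mul_pow, ← pow_mul, pow_succ]; ring
    _ = ε ^ ν * d * D ^ (ν + 1) := by rw [hexp, pow_add, hd]; ring

/-- Rectangular, so that `moorePoly_eq_sum` can expand along the column minors of
`mooreMatrix q (m + 1) e` for `e : Fin m → Ω`. -/
def mooreMatrix {ι Ω : Type*} [Monoid Ω] (q r : ℕ) (e : ι → Ω) : Matrix ι (Fin r) Ω :=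
  Matrix.of fun i j => e i ^ q ^ (j : ℕ)

theorem mooreMatrix_map {ι Ω Ω' : Type*} [Semiring Ω] [Semiring Ω'] (φ : Ω →+* Ω') (r : ℕ)
    (e : ι → Ω) : (mooreMatrix q r e).map φ = mooreMatrix q r (φ ∘ e) := by
  ext i j
  simp [mooreMatrix]

noncomputable def moorePoly {Ω : Type*} [CommRing Ω] (q : ℕ) {m : ℕ} (e : Fin m → Ω) :
    Polynomial Ω :=
  (mooreMatrix q (m + 1) (Fin.snoc (C ∘ e) X)).det

section MoorePoly

variable {Ω : Type*} [CommRing Ω] {m : ℕ}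

theorem eval_moorePoly (e : Fin m → Ω) (x : Ω) :
    (moorePoly q e).eval x = (mooreMatrix q (m + 1) (Fin.snoc e x)).det := by
  rw [moorePoly, ← coe_evalRingHom, RingHom.map_det, RingHom.mapMatrix_apply, mooreMatrix_map,
    Fin.comp_snoc]
  simp [Function.comp_def]

theorem moorePoly_eq_sum (e : Fin m → Ω) :
    moorePoly q e = ∑ j : Fin (m + 1),
      C ((-1) ^ (m + j : ℕ) * ((mooreMatrix q (m + 1) e).submatrix id j.succAbove).det) *
        X ^ q ^ (j : ℕ) := by
  rw [moorePoly, Matrix.det_succ_row _ (Fin.last m)]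
  refine Finset.sum_congr rfl fun j _ => ?_
  have hminor : (mooreMatrix q (m + 1) (Fin.snoc (C ∘ e) X)).submatrix (Fin.last m).succAbove
      j.succAbove = ((mooreMatrix q (m + 1) e).submatrix id j.succAbove).map C := by
    ext
    simp [mooreMatrix]
  rw [hminor, ← RingHom.mapMatrix_apply, ← RingHom.map_det]
  simp [mooreMatrix]

theorem coeff_moorePoly (hq : 1 < q) (e : Fin m → Ω) (j : Fin (m + 1)) :
    (moorePoly q e).coeff (q ^ (j : ℕ)) =
      (-1) ^ (m + j : ℕ) * ((mooreMatrix q (m + 1) e).submatrix id j.succAbove).det := by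
  rw [moorePoly_eq_sum, finsetSum_coeff]
  simp only [coeff_C_mul_X_pow, Nat.pow_right_inj hq, Fin.val_inj]
  simp

theorem natDegree_moorePoly_le (hq : 0 < q) (e : Fin m → Ω) :
    (moorePoly q e).natDegree ≤ q ^ m := by
  rw [moorePoly_eq_sum]
  refine natDegree_sum_le_of_forall_le _ _ fun j _ => (natDegree_C_mul_X_pow_le _ _).trans ?_
  exact Nat.pow_le_pow_right hq (Nat.lt_succ_iff.mp j.isLt)

theorem coeff_moorePoly_top (hq : 1 < q) (e : Fin m → Ω) :
    (moorePoly q e).coeff (q ^ m) = (mooreMatrix q m e).det := by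
  have h := coeff_moorePoly hq e (Fin.last m)
  rw [Fin.val_last, ← two_mul, pow_mul, neg_one_sq, one_pow, one_mul] at h
  rw [h]
  congr
  ext
  simp [mooreMatrix]

end MoorePoly

noncomputable def frobeniusPowers (F Ω : Type*) [Field F] [Fintype F] [CommRing Ω] [Algebra F Ω]
    (r : ℕ) : Ω →ₗ[F] Fin r → Ω :=
  LinearMap.pi fun j => (FiniteField.frobeniusAlgHom F Ω ^ (j : ℕ)).toLinearMap

section Frobenius

variable {F Ω : Type*} [Field F] [Fintype F] [CommRing Ω] [Algebra F Ω]

theorem FiniteField.frobeniusAlgHom_pow_apply (j : ℕ) (x : Ω) :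
    (FiniteField.frobeniusAlgHom F Ω ^ j) x = x ^ Fintype.card F ^ j := by
  induction j with
  | zero => simp
  | succ j ih =>
    rw [pow_succ', AlgHom.mul_apply, ih, FiniteField.frobeniusAlgHom_apply, ← pow_mul, ← pow_succ]

theorem mooreMatrix_apply_eq_frobeniusPowers {ι : Type*} (r : ℕ) (e : ι → Ω) (i : ι) :
    mooreMatrix (Fintype.card F) r e i = frobeniusPowers F Ω r (e i) := by
  ext j
  simp [mooreMatrix, frobeniusPowers, FiniteField.frobeniusAlgHom_pow_apply]

theorem mooreMatrix_sum_smul {ι κ : Type*} [Fintype κ] (r : ℕ) (A : Matrix ι κ F) (e : κ → Ω) :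
    mooreMatrix (Fintype.card F) r (fun i => ∑ l, A i l • e l) =
      A.map (algebraMap F Ω) * mooreMatrix (Fintype.card F) r e := by
  ext i j
  simp only [mooreMatrix, Matrix.of_apply, Matrix.mul_apply, Matrix.map_apply,
    ← FiniteField.frobeniusAlgHom_pow_apply (F := F), map_sum, map_mul, AlgHom.commutes,
    Algebra.smul_def]

theorem coeff_moorePoly_one {m : ℕ} (e : Fin m → Ω) :
    (moorePoly (Fintype.card F) e).coeff 1 =
      (-1) ^ m * (mooreMatrix (Fintype.card F) m e).det ^ Fintype.card F := by
  have h := coeff_moorePoly (Fintype.one_lt_card (α := F)) e 0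
  rw [Fin.val_zero, pow_zero, add_zero] at h
  rw [h, ← FiniteField.frobeniusAlgHom_apply (K := F), ← AlgHom.coe_toRingHom, RingHom.map_det,
    RingHom.mapMatrix_apply, mooreMatrix_map]
  congr
  ext i j
  simp [mooreMatrix, ← pow_mul, pow_succ']

theorem det_mooreMatrix_pow_card_pow {m : ℕ} (e : Fin m → Ω) (n : ℕ) (A : Matrix (Fin m) (Fin m) F)
    (hA : ∀ i, e i ^ Fintype.card F ^ n = ∑ l, A i l • e l) :
    (mooreMatrix (Fintype.card F) m e).det ^ Fintype.card F ^ n =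
      algebraMap F Ω A.det * (mooreMatrix (Fintype.card F) m e).det := by
  have hmap :
      (mooreMatrix (Fintype.card F) m e).map (FiniteField.frobeniusAlgHom F Ω ^ n).toRingHom =
        A.map (algebraMap F Ω) * mooreMatrix (Fintype.card F) m e := by
    rw [mooreMatrix_map, ← mooreMatrix_sum_smul]
    congr 1
    funext i
    exact (FiniteField.frobeniusAlgHom_pow_apply n (e i)).trans (hA i)
  have := congrArg Matrix.det hmap
  rwa [← RingHom.mapMatrix_apply, ← RingHom.map_det, Matrix.det_mul, ← RingHom.mapMatrix_apply,
    ← RingHom.map_det, AlgHom.toRingHom_eq_coe, AlgHom.coe_toRingHom,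
    FiniteField.frobeniusAlgHom_pow_apply] at this

theorem det_mooreMatrix_basis_pow_card_pow {W : Submodule F Ω} {m : ℕ}
    (b : Module.Basis (Fin m) F W) (n : ℕ) (f : W →ₗ[F] W)
    (hf : ∀ x : W, (f x : Ω) = (x : Ω) ^ Fintype.card F ^ n) :
    (mooreMatrix (Fintype.card F) m (W.subtype ∘ b)).det ^ Fintype.card F ^ n =
      algebraMap F Ω (LinearMap.det f) * (mooreMatrix (Fintype.card F) m (W.subtype ∘ b)).det := by
  rw [← LinearMap.det_toMatrix b, ← Matrix.det_transpose (LinearMap.toMatrix b b f)]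
  refine det_mooreMatrix_pow_card_pow (F := F) (Ω := Ω) _ n _ fun i => ?_
  simp only [Function.comp_apply, Submodule.subtype_apply, ← hf, Matrix.transpose_apply,
    LinearMap.toMatrix_apply, ← Submodule.coe_smul, ← Submodule.coe_sum, b.sum_repr]

end Frobenius

theorem neg_one_pow_geom_sum_card (F : Type*) {Ω : Type*} [Field F] [Fintype F] [CommRing Ω]
    [Algebra F Ω] (n : ℕ) :
    (-1 : Ω) ^ (∑ i ∈ Finset.range n, Fintype.card F ^ i) = (-1) ^ n := by
  rw [← Finset.prod_pow_eq_pow_sum, Finset.prod_congr rfl fun i _ => ?_, Finset.prod_const,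
    Finset.card_range]
  rw [← FiniteField.frobeniusAlgHom_pow_apply (F := F), map_neg, map_one]

section MooreField

variable {F Ω : Type*} [Field F] [Fintype F] [Field Ω] [Algebra F Ω] {m : ℕ}

theorem linearIndependent_of_det_mooreMatrix_ne_zero {e : Fin m → Ω}
    (h : (mooreMatrix (Fintype.card F) m e).det ≠ 0) : LinearIndependent F e := by
  refine LinearIndependent.of_comp (frobeniusPowers F Ω m) ?_
  convert (Matrix.linearIndependent_rows_of_det_ne_zero h).restrict_scalars' F
  exact (mooreMatrix_apply_eq_frobeniusPowers m e _).symm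

theorem eval_moorePoly_eq_zero_of_mem_span {e : Fin m → Ω} {w : Ω}
    (hw : w ∈ Submodule.span F (Set.range e)) : (moorePoly (Fintype.card F) e).eval w = 0 := by
  rw [eval_moorePoly]
  by_contra h
  exact (linearIndependent_finSnoc.mp (linearIndependent_of_det_mooreMatrix_ne_zero h)).2 hw

theorem exists_finset_coe_eq_span {e : Fin m → Ω} (he : LinearIndependent F e) :
    ∃ Z : Finset Ω, (Z : Set Ω) = Submodule.span F (Set.range e) ∧ Z.card = Fintype.card F ^ m := by
  have : Module.Finite F (Submodule.span F (Set.range e)) :=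
    Module.Finite.span_of_finite (R := F) (Set.finite_range _)
  have : Finite (Submodule.span F (Set.range e)) := Module.finite_of_finite F
  refine ⟨(Submodule.span F (Set.range e) : Set Ω).toFinite.toFinset, by simp, ?_⟩
  rw [← Set.ncard_eq_toFinset_card _ (Set.toFinite _), ← Nat.card_coe_set_eq,
    SetLike.coe_sort_coe, Module.natCard_eq_pow_finrank (K := F), finrank_span_eq_card he,
    Nat.card_eq_fintype_card, Fintype.card_fin]

theorem det_mooreMatrix_ne_zero {e : Fin m → Ω} (he : LinearIndependent F e) :
    (mooreMatrix (Fintype.card F) m e).det ≠ 0 := by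
  induction m with
  | zero => simp
  | succ m ih =>
    rw [← Fin.snoc_init_self e] at he ⊢
    obtain ⟨he', hlast⟩ := linearIndependent_finSnoc.mp he
    set G := moorePoly (Fintype.card F) (Fin.init e) with hG_def
    have hG : G ≠ 0 := fun h => ih he' <| by
      rw [← coeff_moorePoly_top (Fintype.one_lt_card (α := F)), ← hG_def, h, coeff_zero]
    intro hdet
    classical
    obtain ⟨Z, hZ, hZcard⟩ := exists_finset_coe_eq_span he'
    -- `G` has degree at most `q ^ m`, but vanishes on the `q ^ m` points of the span
    -- and at `e (last m)`
    refine hG (eq_zero_of_natDegree_lt_card_of_eval_eq_zero' G (insert (e (Fin.last m)) Z) ?_ ?_)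
    · simp only [Finset.mem_insert]
      rintro x (rfl | hx)
      · rwa [eval_moorePoly]
      · exact eval_moorePoly_eq_zero_of_mem_span (by rwa [← SetLike.mem_coe, ← hZ])
    · rw [Finset.card_insert_of_notMem (by rwa [← Finset.mem_coe, hZ]), hZcard]
      exact Nat.lt_succ_of_le (natDegree_moorePoly_le Fintype.card_pos _)

theorem C_det_mooreMatrix_mul_eq_C_leadingCoeff_mul_moorePoly {e : Fin m → Ω}
    (he : LinearIndependent F e) {p : Polynomial Ω}
    (hp : ∀ w ∈ Submodule.span F (Set.range e), p.eval w = 0)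
    (hdeg : p.natDegree ≤ Fintype.card F ^ m) :
    C (mooreMatrix (Fintype.card F) m e).det * p =
      C p.leadingCoeff * moorePoly (Fintype.card F) e := by
  obtain ⟨Z, hZ, hZcard⟩ := exists_finset_coe_eq_span he
  have hmem : ∀ {w}, w ∈ Z → w ∈ Submodule.span F (Set.range e) := fun hw => by
    rwa [← SetLike.mem_coe, ← hZ]
  have hG :
      (moorePoly (Fintype.card F) e).leadingCoeff = (mooreMatrix (Fintype.card F) m e).det := by
    have htop := coeff_moorePoly_top (Fintype.one_lt_card (α := F)) e
    rw [leadingCoeff, natDegree_eq_of_le_of_coeff_ne_zero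
      (natDegree_moorePoly_le Fintype.card_pos e) (htop ▸ det_mooreMatrix_ne_zero he), htop]
  have hpZ := eq_C_leadingCoeff_mul_prod_X_sub_C (fun z hz => hp z (hmem hz)) (hZcard ▸ hdeg)
  have hGZ := eq_C_leadingCoeff_mul_prod_X_sub_C (Z := Z)
    (fun z hz => eval_moorePoly_eq_zero_of_mem_span (hmem hz))
    (hZcard ▸ natDegree_moorePoly_le Fintype.card_pos e)
  conv_lhs => rw [hpZ]
  conv_rhs => rw [hGZ, hG]
  ring

end MooreField

noncomputable def linearizedPoly {K : Type*} [Semiring K] (q : ℕ) (c : ℕ →₀ K) : K[X] :=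
  c.sum fun i a => C a * X ^ q ^ i

section Linearized

variable {K : Type*} [CommSemiring K] (c : ℕ →₀ K)

theorem aeval_linearizedPoly {A : Type*} [CommRing A] [Algebra K A] (x : A) :
    aeval x (linearizedPoly q c) = c.sum fun i a => algebraMap K A a * x ^ q ^ i := by
  simp [linearizedPoly, Finsupp.sum, map_sum]

theorem coeff_linearizedPoly_pow (hq : 1 < q) (i : ℕ) :
    (linearizedPoly q c).coeff (q ^ i) = c i := by
  simp only [linearizedPoly, Finsupp.sum, finsetSum_coeff, coeff_C_mul_X_pow, Nat.pow_right_inj hq]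
  simp

theorem coeff_linearizedPoly_one (hq : 1 < q) : (linearizedPoly q c).coeff 1 = c 0 := by
  simpa using coeff_linearizedPoly_pow c hq 0

theorem natDegree_linearizedPoly (hq : 1 < q) {s : ℕ} (hs : c s ≠ 0)
    (htop : ∀ i, s < i → c i = 0) : (linearizedPoly q c).natDegree = q ^ s := by
  refine natDegree_eq_of_le_of_coeff_ne_zero ?_ (by rwa [coeff_linearizedPoly_pow c hq])
  refine natDegree_sum_le_of_forall_le _ _ fun i hi => (natDegree_C_mul_X_pow_le _ _).trans ?_
  exact Nat.pow_le_pow_right (by omega)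
    (not_lt.mp fun h => Finsupp.mem_support_iff.mp hi (htop i h))

theorem leadingCoeff_linearizedPoly (hq : 1 < q) {s : ℕ} (hs : c s ≠ 0)
    (htop : ∀ i, s < i → c i = 0) : (linearizedPoly q c).leadingCoeff = c s := by
  rw [leadingCoeff, natDegree_linearizedPoly c hq hs htop, coeff_linearizedPoly_pow c hq]

theorem derivative_linearizedPoly (hq : (q : K) = 0) :
    derivative (linearizedPoly q c) = C (c 0) := by
  rw [linearizedPoly, Finsupp.sum, derivative_sum]
  simp only [derivative_C_mul_X_pow]
  rw [Finset.sum_eq_single 0 (fun i _ hi => by simp [hq, hi])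
    (fun h => by simp [Finsupp.notMem_support_iff.mp h])]
  simp

end Linearized

theorem separable_linearizedPoly {K : Type*} [Field K] (c : ℕ →₀ K) (hq : (q : K) = 0)
    (h0 : c 0 ≠ 0) : (linearizedPoly q c).Separable :=
  (separable_def' _).mpr ⟨0, C (c 0)⁻¹, by
    rw [derivative_linearizedPoly c hq, zero_mul, zero_add, ← C_mul, inv_mul_cancel₀ h0, C_1]⟩

section RootSpace

variable {F K Ω : Type*} [Field F] [Fintype F] [Field K] [Field Ω] [Algebra F Ω] [Algebra K Ω]

theorem finrank_eq_of_mem_iff_aeval_eq_zero [IsAlgClosed Ω] {p : K[X]} (hsep : p.Separable) {s : ℕ}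
    (hdeg : p.natDegree = Fintype.card F ^ s) {W : Submodule F Ω} [Module.Finite F W]
    (hW : ∀ x, x ∈ W ↔ aeval x p = 0) : Module.finrank F W = s := by
  have hset : (W : Set Ω) = p.rootSet Ω := Set.ext fun x => by
    simp [mem_rootSet, hW, hsep.ne_zero]
  refine Nat.pow_right_injective (Fintype.one_lt_card (α := F)) ?_
  dsimp only
  rw [← Nat.card_eq_fintype_card, ← Module.natCard_eq_pow_finrank, ← SetLike.coe_sort_coe, hset,
    Nat.card_eq_fintype_card, card_rootSet_eq_natDegree hsep (IsAlgClosed.splits _), hdeg,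
    Nat.card_eq_fintype_card]

theorem algebraMap_div_mul_det_mooreMatrix {c : ℕ →₀ K} {s : ℕ} (hs : c s ≠ 0)
    (htop : ∀ i, s < i → c i = 0) {e : Fin s → Ω} (he : LinearIndependent F e)
    (hroots :
      ∀ w ∈ Submodule.span F (Set.range e), aeval w (linearizedPoly (Fintype.card F) c) = 0) :
    algebraMap K Ω (c 0 / c s) * (mooreMatrix (Fintype.card F) s e).det =
      (-1) ^ s * (mooreMatrix (Fintype.card F) s e).det ^ Fintype.card F := by
  have h := congrArg (coeff · 1) <| C_det_mooreMatrix_mul_eq_C_leadingCoeff_mul_moorePoly he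
    (p := (linearizedPoly (Fintype.card F) c).map (algebraMap K Ω))
    (fun w hw => by rw [eval_map_algebraMap, hroots w hw])
    (natDegree_map_le.trans (natDegree_linearizedPoly c Fintype.one_lt_card hs htop).le)
  simp only [coeff_C_mul, coeff_moorePoly_one, leadingCoeff_map, coeff_map,
    coeff_linearizedPoly_one c Fintype.one_lt_card,
    leadingCoeff_linearizedPoly c Fintype.one_lt_card hs htop] at h
  rw [map_div₀, div_mul_eq_mul_div, div_eq_iff ((_root_.map_ne_zero _).mpr hs), mul_comm, h]
  ring

end RootSpace

theorem norm_eq_charpoly_constant_term_general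
    {n s : ℕ} (hn : 0 < n)
    {F : Type} [Field F] [Fintype F] (hq : Fintype.card F = q)
    [Algebra F k]
    (T : TwistedPolynomialRing q k R)
    {Ω : Type} [Field Ω] [Algebra k Ω] [Algebra F Ω] [IsScalarTower F k Ω] [IsAlgClosed Ω]
    (u : R) (hu0 : T.basis.repr u 0 ≠ 0) (hus : T.basis.repr u s ≠ 0)
    (htop : ∀ i : ℕ, s < i → T.basis.repr u i = 0)
    (W : Submodule F Ω) (hW : ∀ x : Ω, x ∈ W ↔ T.act u x = 0)
    [Module.Finite F W]
    (πW : W →ₗ[F] W) (hπ : ∀ x : W, (πW x : Ω) = (x : Ω) ^ q ^ n) :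
    (T.basis.repr u 0 / T.basis.repr u s) ^ (∑ i ∈ Finset.range n, q ^ i) =
      algebraMap F k ((-1) ^ (s * (n - 1)) * (LinearMap.charpoly πW).eval 0) := by
  subst hq
  set c := T.basis.repr u
  have hL : ∀ x : Ω, x ∈ W ↔ aeval x (linearizedPoly (Fintype.card F) c) = 0 := by
    simpa only [aeval_linearizedPoly, TwistedPolynomialRing.act] using hW
  have hsep := separable_linearizedPoly c
    (by rw [← map_natCast (algebraMap F k), FiniteField.cast_card_eq_zero, map_zero]) hu0
  have hrank : Module.finrank F W = s := finrank_eq_of_mem_iff_aeval_eq_zero hsep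
    (natDegree_linearizedPoly c Fintype.one_lt_card hus htop) hL
  set b := (Module.finBasis F W).reindex (finCongr hrank)
  have he : LinearIndependent F (W.subtype ∘ b) := b.linearIndependent.map' W.subtype W.ker_subtype
  have hspan : Submodule.span F (Set.range (W.subtype ∘ b)) = W := by
    rw [Set.range_comp, Submodule.span_image, b.span_eq, Submodule.map_top, Submodule.range_subtype]
  have hratio := algebraMap_div_mul_det_mooreMatrix hus htop he fun w hw => (hL w).mp (hspan ▸ hw)
  apply (algebraMap k Ω).injective
  rw [map_pow, pow_geom_sum_eq_of_mul_eq (det_mooreMatrix_ne_zero he) hratio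
    (det_mooreMatrix_basis_pow_card_pow b n πW hπ), ← pow_mul, mul_comm s, pow_mul,
    neg_one_pow_geom_sum_card F, ← IsScalarTower.algebraMap_apply, LinearMap.eval_zero_charpoly,
    hrank]
  obtain ⟨n, rfl⟩ := Nat.exists_eq_add_one_of_ne_zero hn.ne'
  simp only [map_mul, map_pow, map_neg, map_one, Nat.add_sub_cancel]
  ring

/-- **The norm identity `Nr_{k/F_q}(u₀/u_s) = (−1)^{s(n−1)} P̄_{u,T}(0)`.**
Let `u = u₀ + u₁τ + ⋯ + u_s τ^s ∈ k{τ}` with `k = F_{q^n}`, `u₀ ≠ 0`, `u_s ≠ 0`.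
Let `W` be the root space of `u(x)` in an algebraic closure of `k`, and `π_W` the
`F_q`-linear action of `π : β ↦ β^{q^n}` on `W`, with characteristic polynomial
`P̄_{u,T}(x)`.  Then `Nr_{k/F_q}(u₀/u_s) = (−1)^{s(n−1)} · P̄_{u,T}(0)`,
where `Nr_{k/F_q}(a) = a^{1+q+⋯+q^{n−1}}`. -/
theorem norm_eq_charpoly_constant_term
    {n s : ℕ} (hn : 0 < n) (hs : 0 < s)
    {F : Type} [Field F] [Fintype F] (hq : Fintype.card F = q)
    [Fintype k] [Algebra F k] (hk : Fintype.card k = q ^ n)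
    (T : TwistedPolynomialRing q k R)
    {Ω : Type} [Field Ω] [Algebra k Ω] [Algebra F Ω] [IsScalarTower F k Ω] [IsAlgClosed Ω]
    (u : R) (hu0 : T.basis.repr u 0 ≠ 0) (hus : T.basis.repr u s ≠ 0)
    (htop : ∀ i : ℕ, s < i → T.basis.repr u i = 0)
    (W : Submodule F Ω) (hW : ∀ x : Ω, x ∈ W ↔ T.act u x = 0)
    [Module.Finite F W]
    (πW : W →ₗ[F] W) (hπ : ∀ x : W, (πW x : Ω) = (x : Ω) ^ q ^ n) :
    (T.basis.repr u 0 / T.basis.repr u s) ^ (∑ i ∈ Finset.range n, q ^ i) =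
      algebraMap F k ((-1) ^ (s * (n - 1)) * (LinearMap.charpoly πW).eval 0) :=
  norm_eq_charpoly_constant_term_general hn hq T u hu0 hus htop W hW πW hπ
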